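/- arXiv:2110.10269 — 3 statements merged into one kernel-verified Lean document; each statement's English description precedes it below -/
import Mathlib

section
/- Let (X,d) be a metric space and g^ν, g : X → [-∞,∞] with g^ν epi-converging to g. Let δ^ν → δ ∈ [0,∞) and suppose x^ν ∈ δ^ν-argmin g^ν for each ν (i.e., g^ν(x^ν) ≤ inf g^ν + δ^ν and g^ν(x^ν) < ∞). If x^ν converges to x̄ along a subsequence and inf g < ∞, then x̄ ∈ δ-argmin g, i.e., g(x̄) ≤ inf g + δ and g(x̄) < ∞. -/
open Filter

/-- Epi-convergence (Rockafellar–Wets sense). -/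
def EpiConverges {X : Type*} [TopologicalSpace X] (g : ℕ → X → EReal) (g₀ : X → EReal) : Prop :=
  (∀ (x : X) (u : ℕ → X), Tendsto u atTop (nhds x) →
      g₀ x ≤ liminf (fun ν => g ν (u ν)) atTop) ∧
  (∀ x : X, ∃ u : ℕ → X, Tendsto u atTop (nhds x) ∧
      limsup (fun ν => g ν (u ν)) atTop ≤ g₀ x)

/-- Cluster points of near-minimizers of epi-convergent functions are near-minimizers
of the limit function. -/
theorem cluster_point_of_near_argmin {X : Type*} [MetricSpace X]
    (g : ℕ → X → EReal) (g₀ : X → EReal) (h : EpiConverges g g₀)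
    (δs : ℕ → ℝ) (δ : ℝ) (hδs : ∀ ν, 0 ≤ δs ν) (hδ : Tendsto δs atTop (nhds δ))
    (hδ0 : 0 ≤ δ)
    (x : ℕ → X)
    (hx : ∀ ν, g ν (x ν) ≤ (⨅ y : X, g ν y) + (δs ν : EReal) ∧ g ν (x ν) < ⊤)
    (xb : X) (φ : ℕ → ℕ) (hφ : StrictMono φ)
    (hlim : Tendsto (fun k => x (φ k)) atTop (nhds xb))
    (hinf_lt : (⨅ y : X, g₀ y) < ⊤) (hinf_gt : ⊥ < ⨅ y : X, g₀ y) :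
    g₀ xb ≤ (⨅ y : X, g₀ y) + (δ : EReal) ∧ g₀ xb < ⊤ := by
  obtain ⟨hlo, hre⟩ := h
  set M : EReal := ⨅ y : X, g₀ y with hM
  set r : ℝ := M.toReal with hr
  have hMr : (r : EReal) = M := EReal.coe_toReal (ne_of_lt hinf_lt) (ne_of_gt hinf_gt)
  -- the interpolating sequence
  set idx : ℕ → ℕ := fun n => Nat.findGreatest (fun k => φ k ≤ n) n with hidxdef
  have hidxφ : ∀ k, idx (φ k) = k := by
    intro k
    have h1 : k ≤ idx (φ k) := Nat.le_findGreatest hφ.le_apply le_rfl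
    have hspec : φ (Nat.findGreatest (fun j => φ j ≤ φ k) (φ k)) ≤ φ k :=
      Nat.findGreatest_spec (P := fun j => φ j ≤ φ k) hφ.le_apply le_rfl
    have h2 : idx (φ k) ≤ k := by
      by_contra hcon
      push_neg at hcon
      exact absurd hspec (not_le.mpr (hφ hcon))
    exact le_antisymm h2 h1
  have hidx : Tendsto idx atTop atTop := by
    refine tendsto_atTop.2 fun b => eventually_atTop.2 ⟨φ b, fun n hn => ?_⟩
    exact Nat.le_findGreatest (hφ.le_apply.trans hn) hn
  set u : ℕ → X := fun n => x (φ (idx n)) with hu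
  have hutend : Tendsto u atTop (nhds xb) := hlim.comp hidx
  have hxb : g₀ xb ≤ liminf (fun ν => g ν (u ν)) atTop := hlo xb u hutend
  have hcompeq : (fun k => g (φ k) (x (φ k))) = (fun ν => g ν (u ν)) ∘ φ := by
    funext k; simp [hu, hidxφ k]
  have hsub : liminf (fun ν => g ν (u ν)) atTop ≤ liminf (fun k => g (φ k) (x (φ k))) atTop := by
    rw [hcompeq, liminf_comp]
    exact liminf_le_liminf_of_le hφ.tendsto_atTop
  -- main estimate
  have key : ∀ ε : ℝ, 0 < ε → g₀ xb ≤ (((r + ε) + (δ + ε) : ℝ) : EReal) := by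
    intro ε hε
    have hMlt : M < ((r + ε : ℝ) : EReal) := by
      rw [← hMr]; exact_mod_cast lt_add_of_pos_right r hε
    obtain ⟨y, hy⟩ := iInf_lt_iff.mp hMlt
    obtain ⟨w, hw, hws⟩ := hre y
    have hev1 : ∀ᶠ ν in atTop, g ν (w ν) < ((r + ε : ℝ) : EReal) :=
      eventually_lt_of_limsup_lt (lt_of_le_of_lt hws hy)
    have hev2 : ∀ᶠ ν in atTop, δs ν < δ + ε :=
      hδ.eventually (Filter.Tendsto.eventually_lt_const (by linarith : δ < δ + ε) tendsto_id)
    have hev : ∀ᶠ ν in atTop, g ν (x ν) ≤ (((r + ε) + (δ + ε) : ℝ) : EReal) := by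
      filter_upwards [hev1, hev2] with ν h1 h2
      calc g ν (x ν) ≤ (⨅ z : X, g ν z) + (δs ν : EReal) := (hx ν).1
        _ ≤ g ν (w ν) + (δs ν : EReal) := by
            gcongr
            exact iInf_le _ _
        _ ≤ ((r + ε : ℝ) : EReal) + ((δ + ε : ℝ) : EReal) := by
            apply add_le_add h1.le
            exact_mod_cast h2.le
        _ = (((r + ε) + (δ + ε) : ℝ) : EReal) := by rw [← EReal.coe_add]
    have hevk : ∀ᶠ k in atTop, g (φ k) (x (φ k)) ≤ (((r + ε) + (δ + ε) : ℝ) : EReal) :=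
      hφ.tendsto_atTop.eventually hev
    have := liminf_le_of_frequently_le' hevk.frequently
    exact hxb.trans (hsub.trans this)
  -- conclude
  have hfinal : g₀ xb ≤ M + (δ : EReal) := by
    by_contra hcon
    push_neg at hcon
    have hM' : M + (δ : EReal) = ((r + δ : ℝ) : EReal) := by
      rw [← hMr, ← EReal.coe_add]
    rw [hM'] at hcon
    obtain ⟨c, hc1, hc2⟩ := EReal.lt_iff_exists_real_btwn.mp hcon
    have hc1' : r + δ < c := by exact_mod_cast hc1
    set ε : ℝ := (c - (r + δ)) / 2 with hε
    have hεpos : 0 < ε := by rw [hε]; linarith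
    have := key ε hεpos
    have hceq : (r + ε) + (δ + ε) = c := by rw [hε]; ring
    rw [hceq] at this
    exact absurd hc2 (not_lt.mpr this)
  refine ⟨hfinal, lt_of_le_of_lt hfinal ?_⟩
  exact EReal.add_lt_top (ne_of_lt hinf_lt) (EReal.coe_ne_top δ)
end

section
/- (Optimality gap theorem.) Let (X,d) be a metric space, f : X → [-∞,∞], subsets X^n ⊂ X, and surjective maps T_n : ℝ^n → X^n. Define f_n : ℝ^n → [-∞,∞] by f_n(x_n) = f(T_n(x_n)), and let f_n^ν : ℝ^n → [-∞,∞]. Assume for some n̄: (a) f + ι_{X^n} epi-converges to f as n → ∞; (b) for all n ≥ n̄, f_n^ν epi-converges to f_n as ν → ∞; (c) inf f > -∞ and inf f_n < ∞ for all n ≥ n̄. Then for every ε > 0 there exists n_ε ≥ n̄ such that for all n ≥ n_ε, whenever δ^ν → δ ∈ [0,∞) and x̄_n^ν ∈ δ^ν-argmin f_n^ν have a cluster point x̄_n, one has f(T_n(x̄_n)) ≤ inf f + ε + δ. -/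
open Filter
open scoped Classical

/-- Optimality gap theorem (Theorem 3.2): controls obtained as cluster points of
near-minimizers of the approximating finite-dimensional problems have optimality
gap `ε + δ` relative to the actual infinite-dimensional problem. -/
theorem optimality_gap {X : Type*} [MetricSpace X]
    (f : X → EReal) (Xn : ℕ → Set X)
    (T : (n : ℕ) → (Fin n → ℝ) → X) (hT : ∀ n, Set.range (T n) = Xn n)
    (fapp : (n : ℕ) → ℕ → (Fin n → ℝ) → EReal)
    (nbar : ℕ)
    (ha : EpiConverges (fun n x => f x + (if x ∈ Xn n then (0 : EReal) else ⊤)) f)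
    (hb : ∀ n ≥ nbar, EpiConverges (fun ν => fapp n ν) (fun xn => f (T n xn)))
    (hc1 : ⊥ < ⨅ x : X, f x)
    (hc2 : ∀ n ≥ nbar, (⨅ xn : Fin n → ℝ, f (T n xn)) < ⊤) :
    ∀ ε : ℝ, 0 < ε → ∃ nε, nbar ≤ nε ∧
      ∀ n ≥ nε, ∀ (δs : ℕ → ℝ) (δ : ℝ), (∀ ν, 0 ≤ δs ν) →
        Tendsto δs atTop (nhds δ) → 0 ≤ δ →
        ∀ (xs : ℕ → (Fin n → ℝ)) (xb : Fin n → ℝ),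
          (∀ ν, fapp n ν (xs ν) ≤ (⨅ y : Fin n → ℝ, fapp n ν y) + (δs ν : EReal) ∧
                fapp n ν (xs ν) < ⊤) →
          (∃ φ : ℕ → ℕ, StrictMono φ ∧ Tendsto (fun k => xs (φ k)) atTop (nhds xb)) →
          f (T n xb) ≤ (⨅ x : X, f x) + (ε : EReal) + (δ : EReal) := by
  intro ε hε
  set g : ℕ → X → EReal := fun n x => f x + (if x ∈ Xn n then (0 : EReal) else ⊤) with hgdef
  have hfbot : ∀ x, f x ≠ ⊥ := fun x =>
    ne_of_gt (lt_of_lt_of_le hc1 (iInf_le _ x))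
  -- equality of infima
  have hinf_eq : ∀ n, (⨅ x : X, g n x) = ⨅ xn : Fin n → ℝ, f (T n xn) := by
    intro n
    apply le_antisymm
    · refine le_iInf fun xn => ?_
      have hmem : T n xn ∈ Xn n := (hT n) ▸ Set.mem_range_self xn
      have hgx : g n (T n xn) = f (T n xn) := by simp [hgdef, hmem]
      exact hgx ▸ iInf_le _ (T n xn)
    · refine le_iInf fun x => ?_
      by_cases hx : x ∈ Xn n
      · rw [← hT n] at hx
        obtain ⟨xn, rfl⟩ := hx
        have hmem : T n xn ∈ Xn n := (hT n) ▸ Set.mem_range_self xn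
        have hgx : g n (T n xn) = f (T n xn) := by simp [hgdef, hmem]
        exact hgx ▸ iInf_le _ xn
      · have : g n x = ⊤ := by
          simp only [hgdef, if_neg hx]
          exact EReal.add_top_of_ne_bot (hfbot x)
        simp [this]
  -- the infimum of f is a real number
  have hlt : (⨅ x : X, f x) < ⊤ :=
    lt_of_le_of_lt (le_iInf fun xn => iInf_le _ (T nbar xn)) (hc2 nbar le_rfl)
  obtain ⟨r, hr⟩ : ∃ r : ℝ, (⨅ x : X, f x) = (r : EReal) := by
    cases hI : (⨅ x : X, f x) with
    | bot => exact absurd hI (ne_of_gt hc1)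
    | top => exact absurd hI (ne_of_lt hlt)
    | coe r => exact ⟨r, rfl⟩
  -- limsup of infima bound from (a)
  have hls : limsup (fun n => ⨅ x : X, g n x) atTop ≤ ⨅ x : X, f x := by
    refine le_iInf fun x => ?_
    obtain ⟨u, hu, hlim⟩ := ha.2 x
    exact le_trans
      (limsup_le_limsup (Eventually.of_forall fun n => iInf_le _ (u n))) hlim
  have hev : ∀ᶠ n in atTop, (⨅ x : X, g n x) < ((r + ε / 2 : ℝ) : EReal) := by
    refine eventually_lt_of_limsup_lt ?_
    rw [hr] at hls
    exact lt_of_le_of_lt hls (by exact_mod_cast (by linarith : r < r + ε / 2))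
  obtain ⟨N, hN⟩ := eventually_atTop.1 hev
  refine ⟨max nbar N, le_max_left _ _, ?_⟩
  intro n hn δs δ hδs0 hδlim hδ0 xs xb hxs hclust
  obtain ⟨φ, hφmono, hφlim⟩ := hclust
  have hnb : nbar ≤ n := le_trans (le_max_left _ _) hn
  have hb' := hb n hnb
  -- bound on inf of the n-th problem
  have hmn : (⨅ xn : Fin n → ℝ, f (T n xn)) < ((r + ε / 2 : ℝ) : EReal) := by
    rw [← hinf_eq]
    exact hN n (le_trans (le_max_right _ _) hn)
  -- limsup of inner infima
  have hlsI : limsup (fun ν => ⨅ y : Fin n → ℝ, fapp n ν y) atTop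
      ≤ ⨅ xn : Fin n → ℝ, f (T n xn) := by
    refine le_iInf fun y => ?_
    obtain ⟨u, hu, hlim⟩ := hb'.2 y
    exact le_trans
      (limsup_le_limsup (Eventually.of_forall fun ν => iInf_le _ (u ν))) hlim
  have hIev : ∀ᶠ ν in atTop,
      (⨅ y : Fin n → ℝ, fapp n ν y) < ((r + ε / 2 : ℝ) : EReal) :=
    eventually_lt_of_limsup_lt (lt_of_le_of_lt hlsI hmn)
  have hδev : ∀ᶠ ν in atTop, δs ν < δ + ε / 2 :=
    hδlim.eventually (gt_mem_nhds (by linarith))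
  have hbound : ∀ᶠ ν in atTop, fapp n ν (xs ν) ≤ ((r + ε + δ : ℝ) : EReal) := by
    filter_upwards [hIev, hδev] with ν h1 h2
    calc fapp n ν (xs ν) ≤ (⨅ y : Fin n → ℝ, fapp n ν y) + (δs ν : EReal) := (hxs ν).1
      _ ≤ ((r + ε / 2 : ℝ) : EReal) + ((δ + ε / 2 : ℝ) : EReal) :=
          add_le_add h1.le (EReal.coe_le_coe_iff.2 h2.le)
      _ = ((r + ε + δ : ℝ) : EReal) := by norm_cast; ring
  -- the merged sequence
  set u : ℕ → (Fin n → ℝ) := fun ν => if ∃ k, φ k = ν then xs ν else xb with hudef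
  have huφ : ∀ k, u (φ k) = xs (φ k) := fun k => by
    simp only [hudef]
    exact if_pos ⟨k, rfl⟩
  have hu : Tendsto u atTop (nhds xb) := by
    rw [tendsto_atTop']
    intro s hs
    obtain ⟨K, hK⟩ := tendsto_atTop'.1 hφlim s hs
    refine ⟨φ K, fun ν hν => ?_⟩
    by_cases h : ∃ k, φ k = ν
    · obtain ⟨k, rfl⟩ := h
      have hKk : K ≤ k := by
        by_contra hlt
        push_neg at hlt
        exact absurd hν (not_le.2 (hφmono hlt))
      rw [huφ k]
      exact hK k hKk
    · simp only [hudef, if_neg h]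
      exact mem_of_mem_nhds hs
  have h1 : f (T n xb) ≤ liminf (fun ν => fapp n ν (u ν)) atTop := hb'.1 xb u hu
  have h2 : liminf (fun ν => fapp n ν (u ν)) atTop
      ≤ liminf (fun k => fapp n (φ k) (u (φ k))) atTop := by
    have := liminf_comp (fun ν => fapp n ν (u ν)) φ atTop
    rw [show (fun k => fapp n (φ k) (u (φ k)))
        = (fun ν => fapp n ν (u ν)) ∘ φ from rfl, this]
    exact liminf_le_liminf_of_le hφmono.tendsto_atTop
  have h3 : liminf (fun k => fapp n (φ k) (u (φ k))) atTop ≤ ((r + ε + δ : ℝ) : EReal) := by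
    have hev' : ∀ᶠ k in atTop, fapp n (φ k) (u (φ k)) ≤ ((r + ε + δ : ℝ) : EReal) := by
      filter_upwards [hφmono.tendsto_atTop.eventually hbound] with k hk
      rw [huφ k]; exact hk
    exact le_trans liminf_le_limsup (limsup_le_of_le (h := hev'))
  calc f (T n xb) ≤ ((r + ε + δ : ℝ) : EReal) := le_trans h1 (le_trans h2 h3)
    _ = (⨅ x : X, f x) + (ε : EReal) + (δ : EReal) := by rw [hr]; norm_cast
end

section
/- For an integrable real random variable η and α ∈ (0,1), the superquantile admits the minimization representation Q̄_α(η) = min over γ ∈ ℝ of γ + (1/(1-α)) E[max{0, η - γ}], and the minimum is attained at γ = Q_α(η). -/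
open MeasureTheory

private lemma su_aux_le {Ω : Type*} [MeasurableSpace Ω] (μ : Measure Ω) [IsProbabilityMeasure μ]
    (η : Ω → ℝ) (hη : Integrable η μ) (hm : Measurable η) (α q γ : ℝ)
    (hα : α ∈ Set.Ioo (0 : ℝ) 1)
    (hq1 : (μ {ω | η ω < q}).toReal ≤ α) (hq2 : α ≤ (μ {ω | η ω ≤ q}).toReal) :
    q + (1 - α)⁻¹ * ∫ ω, max 0 (η ω - q) ∂μ ≤ γ + (1 - α)⁻¹ * ∫ ω, max 0 (η ω - γ) ∂μ := by
  obtain ⟨hα0, hα1⟩ := hα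
  have hc : (0:ℝ) < (1 - α)⁻¹ := inv_pos.2 (by linarith)
  have hc1 : (1 - α)⁻¹ * (1 - α) = 1 := inv_mul_cancel₀ (by linarith)
  have hintq : Integrable (fun ω => max 0 (η ω - q)) μ :=
    (integrable_const (0:ℝ)).sup (hη.sub (integrable_const q))
  have hintγ : Integrable (fun ω => max 0 (η ω - γ)) μ :=
    (integrable_const (0:ℝ)).sup (hη.sub (integrable_const γ))
  rcases le_total γ q with hγ | hγ
  · -- γ ≤ q, use s = {q ≤ η}
    set s : Set Ω := {ω | q ≤ η ω} with hs
    have hsm : MeasurableSet s := measurableSet_le measurable_const hm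
    have hind : Integrable (s.indicator fun _ => (q - γ)) μ :=
      (integrable_const (q - γ)).indicator hsm
    have hpt : ∀ ω, max 0 (η ω - q) + s.indicator (fun _ => (q - γ)) ω ≤ max 0 (η ω - γ) := by
      intro ω
      simp only [Set.indicator_apply]
      split_ifs with h
      · have h' : q ≤ η ω := h
        rcases max_cases 0 (η ω - q) with ⟨h1, h2⟩ | ⟨h1, h2⟩ <;>
          rcases max_cases 0 (η ω - γ) with ⟨h3, h4⟩ | ⟨h3, h4⟩ <;>
          rw [h1, h3] <;> linarith
      · have h' : ¬ q ≤ η ω := h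
        push_neg at h'
        rcases max_cases 0 (η ω - q) with ⟨h1, h2⟩ | ⟨h1, h2⟩ <;>
          rcases max_cases 0 (η ω - γ) with ⟨h3, h4⟩ | ⟨h3, h4⟩ <;>
          rw [h1, h3] <;> linarith
    have hint_le : (∫ ω, max 0 (η ω - q) ∂μ) + (q - γ) * (μ s).toReal
        ≤ ∫ ω, max 0 (η ω - γ) ∂μ := by
      have h1 : (∫ ω, (max 0 (η ω - q) + s.indicator (fun _ => (q - γ)) ω) ∂μ)
          ≤ ∫ ω, max 0 (η ω - γ) ∂μ := integral_mono (hintq.add hind) hintγ hpt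
      rwa [integral_add hintq hind, integral_indicator_const _ hsm, smul_eq_mul,
        mul_comm] at h1
    have hmeas : 1 - α ≤ (μ s).toReal := by
      have hcompl : sᶜ = {ω | η ω < q} := by
        ext ω; simp [hs, not_le]
      have hadd : (μ s).toReal + (μ sᶜ).toReal = 1 := by
        rw [← ENNReal.toReal_add (measure_ne_top μ s) (measure_ne_top μ sᶜ),
          measure_add_measure_compl hsm, measure_univ, ENNReal.toReal_one]
      rw [hcompl] at hadd
      linarith
    set I1 := ∫ ω, max 0 (η ω - q) ∂μ
    set I2 := ∫ ω, max 0 (η ω - γ) ∂μ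
    set m := (μ s).toReal
    nlinarith [mul_le_mul_of_nonneg_left hint_le (le_of_lt hc),
      mul_le_mul_of_nonneg_left hmeas (mul_nonneg (le_of_lt hc) (by linarith : (0:ℝ) ≤ q - γ))]
  · -- q ≤ γ, use s = {q < η}
    set s : Set Ω := {ω | q < η ω} with hs
    have hsm : MeasurableSet s := measurableSet_lt measurable_const hm
    have hind : Integrable (s.indicator fun _ => (q - γ)) μ :=
      (integrable_const (q - γ)).indicator hsm
    have hpt : ∀ ω, max 0 (η ω - q) + s.indicator (fun _ => (q - γ)) ω ≤ max 0 (η ω - γ) := by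
      intro ω
      simp only [Set.indicator_apply]
      split_ifs with h
      · have h' : q < η ω := h
        rcases max_cases 0 (η ω - q) with ⟨h1, h2⟩ | ⟨h1, h2⟩ <;>
          rcases max_cases 0 (η ω - γ) with ⟨h3, h4⟩ | ⟨h3, h4⟩ <;>
          rw [h1, h3] <;> linarith
      · have h' : ¬ q < η ω := h
        push_neg at h'
        rcases max_cases 0 (η ω - q) with ⟨h1, h2⟩ | ⟨h1, h2⟩ <;>
          rcases max_cases 0 (η ω - γ) with ⟨h3, h4⟩ | ⟨h3, h4⟩ <;>
          rw [h1, h3] <;> linarith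
    have hint_le : (∫ ω, max 0 (η ω - q) ∂μ) + (q - γ) * (μ s).toReal
        ≤ ∫ ω, max 0 (η ω - γ) ∂μ := by
      have h1 : (∫ ω, (max 0 (η ω - q) + s.indicator (fun _ => (q - γ)) ω) ∂μ)
          ≤ ∫ ω, max 0 (η ω - γ) ∂μ := integral_mono (hintq.add hind) hintγ hpt
      rwa [integral_add hintq hind, integral_indicator_const _ hsm, smul_eq_mul,
        mul_comm] at h1
    have hmeas : (μ s).toReal ≤ 1 - α := by
      have hcompl : sᶜ = {ω | η ω ≤ q} := by
        ext ω; simp [hs, not_lt]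
      have hadd : (μ s).toReal + (μ sᶜ).toReal = 1 := by
        rw [← ENNReal.toReal_add (measure_ne_top μ s) (measure_ne_top μ sᶜ),
          measure_add_measure_compl hsm, measure_univ, ENNReal.toReal_one]
      rw [hcompl] at hadd
      linarith
    have hmnn : 0 ≤ (μ s).toReal := ENNReal.toReal_nonneg
    set I1 := ∫ ω, max 0 (η ω - q) ∂μ
    set I2 := ∫ ω, max 0 (η ω - γ) ∂μ
    set m := (μ s).toReal
    nlinarith [mul_le_mul_of_nonneg_left hint_le (le_of_lt hc),
      mul_le_mul_of_nonneg_left hmeas (mul_nonneg (le_of_lt hc) (by linarith : (0:ℝ) ≤ γ - q))]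

/-- Rockafellar–Uryasev minimization representation of the superquantile: for an
integrable random variable `η`, `α ∈ (0,1)` and `q` an `α`-quantile of `η`, the value
`Q̄_α(η) = q + (1-α)⁻¹ E[max{0, η - q}]` is the least value of
`γ ↦ γ + (1-α)⁻¹ E[max{0, η - γ}]`, the minimum being attained at `γ = q`. -/
theorem superquantile_min_representation
    {Ω : Type*} [MeasurableSpace Ω] (μ : Measure Ω) [IsProbabilityMeasure μ]
    (η : Ω → ℝ) (hη : Integrable η μ) (α q : ℝ) (hα : α ∈ Set.Ioo (0 : ℝ) 1)
    (hq1 : (μ {ω | η ω < q}).toReal ≤ α) (hq2 : α ≤ (μ {ω | η ω ≤ q}).toReal) :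
    IsLeast {v : ℝ | ∃ γ : ℝ, v = γ + (1 - α)⁻¹ * ∫ ω, max 0 (η ω - γ) ∂μ}
      (q + (1 - α)⁻¹ * ∫ ω, max 0 (η ω - q) ∂μ) := by
  constructor
  · exact ⟨q, rfl⟩
  · rintro v ⟨γ, rfl⟩
    -- replace η by a measurable representative
    set f : Ω → ℝ := hη.1.mk η with hf
    have hfm : Measurable f := hη.1.stronglyMeasurable_mk.measurable
    have hae : η =ᵐ[μ] f := hη.1.ae_eq_mk
    have hfint : Integrable f μ := hη.congr hae
    have hIeq : ∀ c : ℝ, (∫ ω, max 0 (η ω - c) ∂μ) = ∫ ω, max 0 (f ω - c) ∂μ := by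
      intro c
      refine integral_congr_ae (hae.mono fun ω h => ?_)
      simp [h]
    have hm1 : μ {ω | η ω < q} = μ {ω | f ω < q} := by
      refine measure_congr (Filter.eventuallyEq_set.2 (hae.mono fun ω h => ?_))
      simp [h]
    have hm2 : μ {ω | η ω ≤ q} = μ {ω | f ω ≤ q} := by
      refine measure_congr (Filter.eventuallyEq_set.2 (hae.mono fun ω h => ?_))
      simp [h]
    rw [hIeq q, hIeq γ]
    exact su_aux_le μ f hfint hfm α q γ hα (hm1 ▸ hq1) (hm2 ▸ hq2)
end
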